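/- Let P₁ ⊆ P₂ be ideals of R with P₁ ⊆ J(R). If the image P₂/P₁ of P₂ in the quotient ring R/P₁ is an S̄-J-ideal of R/P₁, where S̄ = {s + P₁ : s ∈ S}, then P₂ is an S-J-ideal of R. -/

import Mathlib

open Ideal

/-- `S` is a multiplicatively closed subset of `R`: `1 ∈ S` and `S` is closed under
multiplication. -/
def MulClosed {R : Type*} [CommRing R] (S : Set R) : Prop :=
  (1 : R) ∈ S ∧ ∀ a ∈ S, ∀ b ∈ S, a * b ∈ S

/-- `I` is an `S`-`𝒥`-ideal associated with `s ∈ S`: for all `a b : R`, `a * b ∈ I`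
implies `s * a ∈ 𝒥(R)` or `s * b ∈ I`, where `𝒥(R)` is the Jacobson radical of `R`. -/
def SJIdealWith {R : Type*} [CommRing R] (S : Set R) (I : Ideal R) (s : R) : Prop :=
  s ∈ S ∧ ∀ a b : R, a * b ∈ I → s * a ∈ (⊥ : Ideal R).jacobson ∨ s * b ∈ I

/-- `I` is an `S`-`𝒥`-ideal: `I` is disjoint from `S` and some `s ∈ S` works. -/
def IsSJIdeal {R : Type*} [CommRing R] (S : Set R) (I : Ideal R) : Prop :=
  S ∩ (I : Set R) = ∅ ∧ ∃ s, SJIdealWith S I s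

/-! A product `a * b ∈ P₂` descends to `R ⧸ P₁`, where the `S̄`-`𝒥` condition applies; it lifts
back because `P₂` is the full preimage of its image (as `P₁ ≤ P₂`) and because an element whose
image lies in `𝒥(R ⧸ P₁)` lies in `𝒥(P₁) = 𝒥(R)` (as `P₁ ≤ 𝒥(R)`). -/

section

variable {R R' : Type*} [CommRing R] [CommRing R']

theorem Ideal.comap_jacobson_bot_le_of_ker_le {f : R →+* R'} (hf : Function.Surjective f)
    (hker : RingHom.ker f ≤ (⊥ : Ideal R).jacobson) :
    (⊥ : Ideal R').jacobson.comap f ≤ (⊥ : Ideal R).jacobson := by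
  rw [comap_jacobson_of_surjective hf, ← RingHom.ker_eq_comap_bot]
  simpa only [jacobson_idem] using jacobson_mono hker

theorem SJIdealWith.comap {f : R →+* R'}
    (hJ : (⊥ : Ideal R').jacobson.comap f ≤ (⊥ : Ideal R).jacobson)
    {S : Set R} {K : Ideal R'} {s : R} (hs : s ∈ S) (h : SJIdealWith (f '' S) K (f s)) :
    SJIdealWith S (K.comap f) s := by
  refine ⟨hs, fun a b hab => ?_⟩
  rw [mem_comap, map_mul] at hab
  rcases h.2 _ _ hab with hsa | hsb
  · exact Or.inl (hJ (by rwa [mem_comap, map_mul]))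
  · exact Or.inr (by rwa [mem_comap, map_mul])

theorem IsSJIdeal.comap {f : R →+* R'}
    (hJ : (⊥ : Ideal R').jacobson.comap f ≤ (⊥ : Ideal R).jacobson)
    {S : Set R} {K : Ideal R'} (h : IsSJIdeal (f '' S) K) : IsSJIdeal S (K.comap f) := by
  obtain ⟨hdisj, _, hsK⟩ := h
  obtain ⟨s, hs, rfl⟩ := hsK.1
  refine ⟨Set.eq_empty_of_forall_notMem fun x ⟨hxS, hxK⟩ => ?_, s, hsK.comap hJ hs⟩
  exact hdisj.subset ⟨Set.mem_image_of_mem f hxS, hxK⟩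

end

theorem stmt16_general {R : Type*} [CommRing R] (S : Set R)
    (P₁ P₂ : Ideal R) (h12 : P₁ ≤ P₂) (hP₁J : P₁ ≤ (⊥ : Ideal R).jacobson)
    (hquot : IsSJIdeal ((Ideal.Quotient.mk P₁) '' S) (P₂.map (Ideal.Quotient.mk P₁))) :
    IsSJIdeal S P₂ := by
  have hsurj := Ideal.Quotient.mk_surjective (I := P₁)
  have hP₂ : (P₂.map (Ideal.Quotient.mk P₁)).comap (Ideal.Quotient.mk P₁) = P₂ := by
    rw [comap_map_of_surjective _ hsurj, ← RingHom.ker_eq_comap_bot, mk_ker, sup_eq_left.mpr h12]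
  have hJ := comap_jacobson_bot_le_of_ker_le hsurj (by rwa [mk_ker])
  simpa only [hP₂] using hquot.comap hJ

theorem stmt16 {R : Type*} [CommRing R] (S : Set R) (hS : MulClosed S)
    (P₁ P₂ : Ideal R) (h12 : P₁ ≤ P₂) (hP₁J : P₁ ≤ (⊥ : Ideal R).jacobson)
    (hquot : IsSJIdeal ((Ideal.Quotient.mk P₁) '' S) (P₂.map (Ideal.Quotient.mk P₁))) :
    IsSJIdeal S P₂ :=
  stmt16_general S P₁ P₂ h12 hP₁J hquot
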